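/- arXiv:1808.07299 — 3 statements merged into one kernel-verified Lean document; each statement's English description precedes it below -/
import Mathlib

section
/- The set T = {x ∈ ℝ² : x₁ > 1/2, ‖x - a·e₁‖ < 1/2, ‖x‖ < 1}, where a = (1 + √10)/6 and e₁ = (1,0), does not contain two points at Euclidean distance exactly 1. -/
open MeasureTheory Metric

noncomputable def a : ℝ := (1 + Real.sqrt 10) / 6

noncomputable def T2 : Set (EuclideanSpace ℝ (Fin 2)) :=
  {x | x 0 > 1/2 ∧ ‖x - a • EuclideanSpace.single (0 : Fin 2) (1 : ℝ)‖ < 1/2 ∧ ‖x‖ < 1}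

theorem stmt_0 : ∀ x ∈ T2, ∀ y ∈ T2, dist x y ≠ 1 := by
  intro x hx y hy
  have hx2 := hx.2.1
  have hy2 := hy.2.1
  have h : dist x y < 1 := by
    calc dist x y ≤ dist x (a • EuclideanSpace.single (0 : Fin 2) (1 : ℝ))
        + dist (a • EuclideanSpace.single (0 : Fin 2) (1 : ℝ)) y := dist_triangle _ _ _
      _ < 1 := by
        rw [dist_eq_norm, dist_eq_norm, ← norm_neg (_ - y)]
        simp only [neg_sub]
        linarith
  linarith
end

section
/- Let a = (1 + √10)/6, T₂ = {x ∈ ℝ² : x₁ > 1/2, ‖x − a·e₁‖ < 1/2, ‖x‖ < 1}, and S₂ = T₂ ∪ (−T₂). Then vol(S₂)/vol(B₂) > 1/4, where B₂ is the unit disk. -/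
open MeasureTheory Metric

/-!
`T2` contains the rectangles `(1/2, 22/25] × (-23/50, 23/50)` and `(22/25, 24/25] × (-7/25, 7/25)`,
of total area `493/1250`: each of their corners lies in both discs, and a rectangle whose corners
lie in a disc is contained in it. Since `T2` and `-T2` are disjoint (they lie in `x₀ > 1/2` and `x₀ < -1/2`),
`vol (T2 ∪ -T2) ≥ 2 · 493/1250 > π/4 = vol B₂ / 4`.
-/

lemma measure_union_neg_eq_two_mul {G : Type*} [MeasurableSpace G] [InvolutiveNeg G]
    [MeasurableNeg G] (μ : Measure G) [μ.IsNegInvariant] {s : Set G} (hs : MeasurableSet s)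
    (hd : Disjoint s (-s)) : μ (s ∪ -s) = 2 * μ s := by
  rw [measure_union hd hs.neg, Measure.measure_neg, two_mul]

open EuclideanSpace

def rect (p q h : ℝ) : Set (EuclideanSpace ℝ (Fin 2)) :=
  {x | x 0 ∈ Set.Ioc p q ∧ x 1 ∈ Set.Ioo (-h) h}

lemma rect_eq_preimage (p q h : ℝ) :
    rect p q h = WithLp.ofLp ⁻¹' Set.univ.pi ![Set.Ioc p q, Set.Ioo (-h) h] := by
  ext x
  simp [rect, Set.mem_pi, Fin.forall_fin_two]

lemma measurableSet_rect (p q h : ℝ) : MeasurableSet (rect p q h) := by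
  rw [rect_eq_preimage]
  exact (MeasurableSet.univ_pi fun i => by fin_cases i <;> simp [measurableSet_Ioc]).preimage
    (PiLp.volume_preserving_ofLp (Fin 2)).measurable

lemma volume_rect (p q h : ℝ) :
    volume (rect p q h) = ENNReal.ofReal (q - p) * ENNReal.ofReal (2 * h) := by
  rw [rect_eq_preimage, (PiLp.volume_preserving_ofLp (Fin 2)).measure_preimage
    (MeasurableSet.univ_pi fun i => by fin_cases i <;> simp [measurableSet_Ioc]).nullMeasurableSet,
    volume_pi_pi, Fin.prod_univ_two]
  simp [Real.volume_Ioc, Real.volume_Ioo, two_mul]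

lemma disjoint_rect {p q h p' q' h' : ℝ} (hqp : q ≤ p') :
    Disjoint (rect p q h) (rect p' q' h') :=
  Set.disjoint_left.2 fun _ hx hx' => not_lt_of_ge (hx.1.2.trans hqp) hx'.1.1

lemma rect_subset_ball {c r p q h : ℝ} (hr : 0 < r)
    (hp : (p - c) ^ 2 + h ^ 2 ≤ r ^ 2) (hq : (q - c) ^ 2 + h ^ 2 ≤ r ^ 2) :
    rect p q h ⊆ ball (c • single 0 1) r := by
  rintro x ⟨⟨hpx, hxq⟩, hhx, hxh⟩
  rw [mem_ball, ← sq_lt_sq₀ dist_nonneg hr.le, dist_sq_eq, Fin.sum_univ_two]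
  simp only [PiLp.smul_apply, PiLp.single_apply, one_ne_zero, ↓reduceIte, smul_eq_mul, mul_one,
    mul_zero, Real.dist_eq, sq_abs, sub_zero]
  have hx₁ : x 1 ^ 2 < h ^ 2 := by nlinarith
  nlinarith [mul_nonneg (sub_nonneg.2 hpx.le) (sub_nonneg.2 hxq)]

lemma T2_eq : T2 = {x | 1/2 < x 0} ∩ ball (a • single 0 1) (1/2) ∩ ball 0 1 := by
  ext x
  simp [T2, dist_eq_norm, and_assoc]

lemma measurableSet_T2 : MeasurableSet T2 := by
  rw [T2_eq]
  have h₀ : Measurable fun x : EuclideanSpace ℝ (Fin 2) => x 0 :=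
    (measurable_pi_apply 0).comp (PiLp.volume_preserving_ofLp (Fin 2)).measurable
  exact ((measurableSet_lt measurable_const h₀).inter measurableSet_ball).inter measurableSet_ball

lemma a_mem_Ioo : a ∈ Set.Ioo (0.69 : ℝ) 0.695 := by
  have h₁ : (3.14 : ℝ) < Real.sqrt 10 := Real.lt_sqrt_of_sq_lt (by norm_num)
  have h₂ : Real.sqrt 10 < 3.17 := (Real.sqrt_lt' (by norm_num)).2 (by norm_num)
  constructor <;> unfold a <;> linarith

lemma rect_subset_T2 {p q h : ℝ} (hp : 1/2 ≤ p) (hpa : (p - a) ^ 2 + h ^ 2 ≤ 1/4)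
    (hqa : (q - a) ^ 2 + h ^ 2 ≤ 1/4) (hq : q ^ 2 + h ^ 2 ≤ 1) (hpq : p ≤ q) :
    rect p q h ⊆ T2 := by
  have hp₀ : 0 ≤ p := by linarith
  rw [T2_eq]
  refine Set.subset_inter (Set.subset_inter (fun x hx => hp.trans_lt hx.1.1) ?_) ?_
  · exact rect_subset_ball (by norm_num) (by linarith) (by linarith)
  · simpa using rect_subset_ball (c := 0) one_pos (by nlinarith) (by linarith)

lemma ofReal_le_volume_T2 : ENNReal.ofReal (493 / 1250) ≤ volume T2 := by
  obtain ⟨ha₁, ha₂⟩ := a_mem_Ioo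
  have h₁ : rect (1/2) (22/25) (23/50) ⊆ T2 :=
    rect_subset_T2 (by norm_num) (by nlinarith) (by nlinarith) (by norm_num) (by norm_num)
  have h₂ : rect (22/25) (24/25) (7/25) ⊆ T2 :=
    rect_subset_T2 (by norm_num) (by nlinarith) (by nlinarith) (by norm_num) (by norm_num)
  calc ENNReal.ofReal (493 / 1250)
      = volume (rect (1/2) (22/25) (23/50) ∪ rect (22/25) (24/25) (7/25)) := by
        rw [measure_union (disjoint_rect le_rfl) (measurableSet_rect _ _ _), volume_rect,
          volume_rect, ← ENNReal.ofReal_mul (by norm_num), ← ENNReal.ofReal_mul (by norm_num),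
          ← ENNReal.ofReal_add (by norm_num) (by norm_num)]
        norm_num
    _ ≤ volume T2 := measure_mono (Set.union_subset h₁ h₂)

lemma disjoint_T2_neg : Disjoint T2 (-T2) :=
  Set.disjoint_left.2 fun x hx hx' => by
    have : 1/2 < -x 0 := hx'.1
    linarith [hx.1]

lemma T2_subset_ball : T2 ⊆ ball 0 1 := fun _ hx => mem_ball_zero_iff.2 hx.2.2

theorem stmt_8 :
    (volume (T2 ∪ -T2)).toReal >
      (1/4) * (volume (ball (0 : EuclideanSpace ℝ (Fin 2)) 1)).toReal := by
  have hfin : volume T2 ≠ ⊤ := ((measure_mono T2_subset_ball).trans_lt measure_ball_lt_top).ne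
  have hT2 : 493 / 1250 ≤ (volume T2).toReal :=
    (ENNReal.ofReal_le_iff_le_toReal hfin).1 ofReal_le_volume_T2
  rw [measure_union_neg_eq_two_mul volume measurableSet_T2 disjoint_T2_neg,
    volume_ball_fin_two, ENNReal.toReal_mul, ENNReal.toReal_mul]
  simp only [ENNReal.toReal_ofNat, ENNReal.toReal_pow, ENNReal.ofReal_one, ENNReal.toReal_one,
    ENNReal.toReal_ofReal Real.pi_pos.le]
  linarith [Real.pi_lt_d2]
end

section
/- For every n ≥ 2 there exists a Lebesgue-measurable subset S of the closed unit ball in ℝⁿ such that no two points of S are at Euclidean distance exactly 1 and vol(S) > (1/2)ⁿ · vol(Bₙ). -/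
/-!
Fix a unit vector `u`, let `a = (1 + √10) / 6`, `d = a - 1/2`, and let
`T = {x | ⟪x, u⟫ > 1/2, ‖x - a • u‖ < 1/2, ‖x‖ < 1}`. Two points of `T` are less than `1` apart
because `T` lies in a ball of radius `1/2`, and points of `T` and `-T` are more than `1` apart
because their `u`-coordinates differ by more than `1`; so `T ∪ -T` has no unit distances.

For the volume, cut the half ball `{‖x‖ < 1/2, ⟪x, u⟫ > 0}` into the slabs `0 < ⟪x, u⟫ < d`,
`d ≤ ⟪x, u⟫ < 2d` and `2d ≤ ⟪x, u⟫`, and move them into `T` by the translation by `a • u`, the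
point reflection through `((a + d) / 2) • u`, and the translation by `u / 2`. The images are
disjoint, and `a` is chosen so that `a² + 2ad = 3/4`, which is exactly what keeps the first image
inside the unit ball. In dimension at least two the images miss a nonempty open part of `T`, so
`vol T` exceeds the volume `(1/2)ⁿ⁺¹ vol B` of the half ball, and `vol (T ∪ -T) = 2 vol T`.
-/

open MeasureTheory Metric Set
open scoped Pointwise RealInnerProductSpace

namespace LarmanRogers

noncomputable def capCenter : ℝ := (1 + √10) / 6

lemma capCenter_quadratic : 3 * capCenter ^ 2 - capCenter = 3 / 4 := by
  have h : √10 ^ 2 = 10 := Real.sq_sqrt (by norm_num)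
  unfold capCenter
  linear_combination h / 12

lemma capCenter_mem_Ioo : capCenter ∈ Ioo (2 / 3) (3 / 4) := by
  have h : √10 ^ 2 = 10 := Real.sq_sqrt (by norm_num)
  have h0 := Real.sqrt_nonneg 10
  unfold capCenter
  constructor <;> nlinarith

variable {E : Type*} [NormedAddCommGroup E]

lemma norm_lt_half_iff (z : E) : ‖z‖ < 1 / 2 ↔ ‖z‖ ^ 2 < 1 / 4 := by
  rw [← sq_lt_sq₀ (norm_nonneg z) (by norm_num)]
  norm_num

variable [InnerProductSpace ℝ E]

def cap (u : E) : Set E :=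
  {x | 1 / 2 < ⟪x, u⟫ ∧ ‖x - capCenter • u‖ < 1 / 2 ∧ ‖x‖ < 1}

def capPair (u : E) : Set E := cap u ∪ -cap u

def ballSlab (u : E) (I : Set ℝ) : Set E := {x | ⟪x, u⟫ ∈ I ∧ ‖x‖ < 1 / 2}

lemma norm_sub_smul_sq {u : E} (hu : ‖u‖ = 1) (x : E) (c : ℝ) :
    ‖x - c • u‖ ^ 2 = ‖x‖ ^ 2 - 2 * c * ⟪x, u⟫ + c ^ 2 := by
  rw [norm_sub_sq_real, real_inner_smul_right, norm_smul, hu, Real.norm_eq_abs, mul_one, sq_abs]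
  ring

lemma mem_cap_iff {u x : E} (hu : ‖u‖ = 1) : x ∈ cap u ↔
    1 / 2 < ⟪x, u⟫ ∧ ‖x‖ ^ 2 - 2 * capCenter * ⟪x, u⟫ + capCenter ^ 2 < 1 / 4 ∧ ‖x‖ ^ 2 < 1 := by
  rw [cap, mem_ofPred_eq, norm_lt_half_iff, norm_sub_smul_sq hu, ← sq_lt_one_iff₀ (norm_nonneg x)]

lemma mem_vadd_ballSlab_iff {u x : E} (hu : ‖u‖ = 1) (c : ℝ) (I : Set ℝ) :
    x ∈ c • u +ᵥ ballSlab u I ↔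
      ⟪x, u⟫ - c ∈ I ∧ ‖x‖ ^ 2 - 2 * c * ⟪x, u⟫ + c ^ 2 < 1 / 4 := by
  rw [mem_vadd_set_iff_neg_vadd_mem, vadd_eq_add, neg_add_eq_sub, ballSlab, mem_ofPred_eq,
    norm_lt_half_iff, norm_sub_smul_sq hu, inner_sub_left, real_inner_smul_left,
    real_inner_self_eq_norm_sq, hu]
  norm_num

lemma mem_vadd_neg_ballSlab_iff {u x : E} (hu : ‖u‖ = 1) (c : ℝ) (I : Set ℝ) :
    x ∈ c • u +ᵥ -ballSlab u I ↔
      c - ⟪x, u⟫ ∈ I ∧ ‖x‖ ^ 2 - 2 * c * ⟪x, u⟫ + c ^ 2 < 1 / 4 := by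
  rw [mem_vadd_set_iff_neg_vadd_mem, vadd_eq_add, mem_neg, neg_add, neg_neg, ← sub_eq_add_neg,
    ballSlab, mem_ofPred_eq, norm_lt_half_iff, norm_sub_rev, norm_sub_smul_sq hu, inner_sub_left,
    real_inner_smul_left, real_inner_self_eq_norm_sq, hu]
  norm_num

def capPieces (u : E) : Set E :=
  (capCenter • u +ᵥ ballSlab u (Ioo 0 (capCenter - 1 / 2))) ∪
    ((2 * capCenter - 1 / 2) • u +ᵥ -ballSlab u (Ico (capCenter - 1 / 2) (2 * capCenter - 1))) ∪
    ((1 / 2 : ℝ) • u +ᵥ ballSlab u (Ici (2 * capCenter - 1)))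

def capRemainder (u : E) : Set E :=
  cap u ∩ {x | ⟪x, u⟫ < capCenter ∧ 1 / 2 < ‖x - (2 * capCenter - 1 / 2) • u‖}

lemma capPieces_subset_cap {u : E} (hu : ‖u‖ = 1) : capPieces u ⊆ cap u := by
  have hq := capCenter_quadratic
  obtain ⟨ha, ha'⟩ := capCenter_mem_Ioo
  rintro x ((hx | hx) | hx) <;> rw [mem_cap_iff hu]
  · obtain ⟨⟨h1, h2⟩, h3⟩ := (mem_vadd_ballSlab_iff hu _ _).1 hx
    refine ⟨by linarith, h3, by nlinarith⟩
  · obtain ⟨⟨h1, h2⟩, h3⟩ := (mem_vadd_neg_ballSlab_iff hu _ _).1 hx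
    refine ⟨by linarith, by nlinarith, by nlinarith⟩
  · obtain ⟨h1 : 2 * capCenter - 1 ≤ ⟪x, u⟫ - 1 / 2, h2⟩ := (mem_vadd_ballSlab_iff hu _ _).1 hx
    have hcs : ⟪x, u⟫ ≤ ‖x‖ := by simpa [hu] using real_inner_le_norm x u
    refine ⟨by linarith, by nlinarith, by nlinarith [norm_nonneg x]⟩

lemma disjoint_capPieces_capRemainder {u : E} (hu : ‖u‖ = 1) :
    Disjoint (capPieces u) (capRemainder u) := by
  obtain ⟨ha, ha'⟩ := capCenter_mem_Ioo
  rw [disjoint_right]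
  rintro x ⟨-, hxa, hxb⟩ ((hx | hx) | hx)
  · linarith [((mem_vadd_ballSlab_iff hu _ _).1 hx).1.1]
  · have hsq : 1 / 4 < ‖x - (2 * capCenter - 1 / 2) • u‖ ^ 2 := by nlinarith
    rw [norm_sub_smul_sq hu] at hsq
    linarith [((mem_vadd_neg_ballSlab_iff hu _ _).1 hx).2]
  · have h1 : 2 * capCenter - 1 ≤ ⟪x, u⟫ - 1 / 2 := ((mem_vadd_ballSlab_iff hu _ _).1 hx).1
    linarith

lemma cap_subset_ball (u : E) : cap u ⊆ ball 0 1 := fun _ hx => mem_ball_zero_iff.2 hx.2.2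

lemma isOpen_cap (u : E) : IsOpen (cap u) :=
  (isOpen_lt continuous_const (by fun_prop)).and
    ((isOpen_lt (by fun_prop) continuous_const).and (isOpen_lt continuous_norm continuous_const))

lemma isOpen_capRemainder (u : E) : IsOpen (capRemainder u) :=
  (isOpen_cap u).inter
    ((isOpen_lt (by fun_prop) continuous_const).and (isOpen_lt continuous_const (by fun_prop)))

lemma capRemainder_nonempty {u v : E} (hu : ‖u‖ = 1) (hv : ‖v‖ = 1) (huv : ⟪v, u⟫ = 0) :
    (capRemainder u).Nonempty := by
  obtain ⟨ha, ha'⟩ := capCenter_mem_Ioo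
  have hq := capCenter_quadratic
  -- `t = a - d/2`; the squared distances from `x` to `a • u` and `(a + d) • u` are
  -- `d²/4 + 81/400 < 1/4` and `9d²/4 + 81/400 > 1/4`.
  set t := (capCenter + 1 / 2) / 2 with ht
  let x := t • u + (9 / 20 : ℝ) • v
  have hxu : ⟪x, u⟫ = t := by
    simp [x, inner_add_left, real_inner_smul_left, hu, huv]
  have hxx : ‖x‖ ^ 2 = t ^ 2 + 81 / 400 := by
    rw [norm_add_sq_real, real_inner_smul_left, real_inner_smul_right, real_inner_comm, huv,
      norm_smul, norm_smul, hu, hv, Real.norm_eq_abs, Real.norm_eq_abs, mul_pow, mul_pow, sq_abs,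
      sq_abs]
    ring
  have hfar : 1 / 2 < ‖x - (2 * capCenter - 1 / 2) • u‖ := by
    refine lt_of_pow_lt_pow_left₀ 2 (norm_nonneg _) ?_
    rw [norm_sub_smul_sq hu, hxu, hxx, ht]
    nlinarith
  refine ⟨x, (mem_cap_iff hu).2 ⟨?_, ?_, ?_⟩, ?_, hfar⟩ <;> simp only [hxu, hxx, ht] <;> nlinarith

lemma dist_lt_one_of_mem_cap {u x y : E} (hx : x ∈ cap u) (hy : y ∈ cap u) : dist x y < 1 := by
  have hx' : dist x (capCenter • u) < 1 / 2 := by rw [dist_eq_norm]; exact hx.2.1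
  have hy' : dist y (capCenter • u) < 1 / 2 := by rw [dist_eq_norm]; exact hy.2.1
  linarith [dist_triangle_right x y (capCenter • u)]

lemma one_lt_dist_of_mem_cap_of_neg_mem_cap {u x y : E} (hu : ‖u‖ ≤ 1) (hx : x ∈ cap u)
    (hy : -y ∈ cap u) : 1 < dist x y := by
  have hy' : 1 / 2 < -⟪y, u⟫ := by simpa [inner_neg_left] using hy.1
  have hcs : ⟪x - y, u⟫ ≤ ‖x - y‖ :=
    (real_inner_le_norm _ _).trans (mul_le_of_le_one_right (norm_nonneg _) hu)
  rw [inner_sub_left] at hcs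
  rw [dist_eq_norm]
  linarith [hx.1]

lemma dist_ne_one_of_mem_capPair {u x y : E} (hu : ‖u‖ ≤ 1) (hx : x ∈ capPair u)
    (hy : y ∈ capPair u) : dist x y ≠ 1 := by
  rcases hx with hx | hx <;> rcases hy with hy | hy
  · exact (dist_lt_one_of_mem_cap hx hy).ne
  · exact (one_lt_dist_of_mem_cap_of_neg_mem_cap hu hx hy).ne'
  · rw [dist_comm]
    exact (one_lt_dist_of_mem_cap_of_neg_mem_cap hu hy hx).ne'
  · rw [← dist_neg_neg]
    exact (dist_lt_one_of_mem_cap hx hy).ne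

lemma capPair_subset_ball (u : E) : capPair u ⊆ ball 0 1 := by
  rintro x (hx | hx)
  · exact cap_subset_ball u hx
  · rw [mem_ball_zero_iff, ← norm_neg]
    exact mem_ball_zero_iff.1 (cap_subset_ball u hx)

lemma disjoint_cap_neg_cap (u : E) : Disjoint (cap u) (-cap u) := by
  rw [disjoint_left]
  intro x hx hx'
  have : 1 / 2 < -⟪x, u⟫ := by simpa [inner_neg_left] using hx'.1
  linarith [hx.1]

section Measure

variable [MeasurableSpace E] [BorelSpace E]

lemma measurableSet_ballSlab (u : E) {I : Set ℝ} (hI : MeasurableSet I) :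
    MeasurableSet (ballSlab u I) :=
  ((continuous_id.inner continuous_const).measurable hI).inter
    (measurableSet_lt continuous_norm.measurable measurable_const)

variable [FiniteDimensional ℝ E] (μ : Measure E) [μ.IsAddHaarMeasure]

lemma measure_ballSlab_Ioi_le_measure_capPieces {u : E} (hu : ‖u‖ = 1) :
    μ (ballSlab u (Ioi 0)) ≤ μ (capPieces u) := by
  obtain ⟨ha, -⟩ := capCenter_mem_Ioo
  set d := capCenter - 1 / 2 with hd
  have hcover : ballSlab u (Ioi 0) ⊆
      ballSlab u (Ioo 0 d) ∪ ballSlab u (Ico d (2 * capCenter - 1)) ∪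
        ballSlab u (Ici (2 * capCenter - 1)) := by
    rintro x ⟨hx, hxr⟩
    rcases lt_or_ge ⟪x, u⟫ d with h | h
    · exact Or.inl (Or.inl ⟨⟨hx, h⟩, hxr⟩)
    rcases lt_or_ge ⟪x, u⟫ (2 * capCenter - 1) with h' | h'
    · exact Or.inl (Or.inr ⟨⟨h, h'⟩, hxr⟩)
    · exact Or.inr ⟨h', hxr⟩
  have hdisj₁ : Disjoint (capCenter • u +ᵥ ballSlab u (Ioo 0 d))
      ((2 * capCenter - 1 / 2) • u +ᵥ -ballSlab u (Ico d (2 * capCenter - 1))) := by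
    rw [disjoint_left]
    intro x hx hx'
    linarith [((mem_vadd_ballSlab_iff hu _ _).1 hx).1.1,
      ((mem_vadd_neg_ballSlab_iff hu _ _).1 hx').1.1, hd]
  have hdisj₂ : Disjoint ((capCenter • u +ᵥ ballSlab u (Ioo 0 d)) ∪
      ((2 * capCenter - 1 / 2) • u +ᵥ -ballSlab u (Ico d (2 * capCenter - 1))))
      ((1 / 2 : ℝ) • u +ᵥ ballSlab u (Ici (2 * capCenter - 1))) := by
    rw [disjoint_right]
    intro x hx hx'
    have h : 2 * capCenter - 1 ≤ ⟪x, u⟫ - 1 / 2 := ((mem_vadd_ballSlab_iff hu _ _).1 hx).1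
    rcases hx' with hx' | hx'
    · linarith [((mem_vadd_ballSlab_iff hu _ _).1 hx').1.2]
    · linarith [((mem_vadd_neg_ballSlab_iff hu _ _).1 hx').1.1]
  calc μ (ballSlab u (Ioi 0))
      ≤ μ (ballSlab u (Ioo 0 d)) + μ (ballSlab u (Ico d (2 * capCenter - 1))) +
          μ (ballSlab u (Ici (2 * capCenter - 1))) :=
        (measure_mono hcover).trans <|
          (measure_union_le _ _).trans (add_le_add_left (measure_union_le _ _) _)
    _ = μ (capPieces u) := by
      rw [capPieces,
        measure_union hdisj₂ ((measurableSet_ballSlab u measurableSet_Ici).const_vadd _),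
        measure_union hdisj₁ ((measurableSet_ballSlab u measurableSet_Ico).neg.const_vadd _),
        measure_vadd, measure_vadd, measure_vadd, Measure.measure_neg]

lemma measure_ballSlab_Ioi_lt_measure_cap {u v : E} (hu : ‖u‖ = 1) (hv : ‖v‖ = 1)
    (huv : ⟪v, u⟫ = 0) : μ (ballSlab u (Ioi 0)) < μ (cap u) := by
  have hfin : μ (capPieces u) ≠ ⊤ :=
    ((measure_mono ((capPieces_subset_cap hu).trans (cap_subset_ball u))).trans_lt
      measure_ball_lt_top).ne
  calc μ (ballSlab u (Ioi 0)) ≤ μ (capPieces u) := measure_ballSlab_Ioi_le_measure_capPieces μ hu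
    _ < μ (capPieces u) + μ (capRemainder u) :=
      ENNReal.lt_add_right hfin ((isOpen_capRemainder u).measure_pos μ
        (capRemainder_nonempty hu hv huv)).ne'
    _ = μ (capPieces u ∪ capRemainder u) :=
      (measure_union (disjoint_capPieces_capRemainder hu)
        (isOpen_capRemainder u).measurableSet).symm
    _ ≤ μ (cap u) := measure_mono (union_subset (capPieces_subset_cap hu) inter_subset_left)

lemma measure_ball_half_le_two_mul {u : E} (hu : u ≠ 0) :
    μ (ball 0 (1 / 2)) ≤ 2 * μ (ballSlab u (Ioi 0)) := by
  have hcover : ball (0 : E) (1 / 2) ⊆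
      ballSlab u (Ioi 0) ∪ -ballSlab u (Ioi 0) ∪ (ℝ ∙ u)ᗮ := by
    intro x hx
    rw [mem_ball_zero_iff] at hx
    rcases lt_trichotomy ⟪x, u⟫ 0 with h | h | h
    · refine Or.inl (Or.inr ⟨?_, by rwa [norm_neg]⟩)
      simpa [inner_neg_left] using h
    · refine Or.inr ?_
      rwa [SetLike.mem_coe, Submodule.mem_orthogonal_singleton_iff_inner_right, real_inner_comm]
    · exact Or.inl (Or.inl ⟨h, hx⟩)
  have hnull : μ (ℝ ∙ u)ᗮ = 0 := by
    refine Measure.addHaar_submodule μ _ fun htop => hu ?_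
    have hmem : u ∈ (ℝ ∙ u)ᗮ := htop ▸ Submodule.mem_top
    rwa [Submodule.mem_orthogonal_singleton_iff_inner_right, inner_self_eq_zero] at hmem
  calc μ (ball 0 (1 / 2))
      ≤ μ (ballSlab u (Ioi 0) ∪ -ballSlab u (Ioi 0)) + μ (ℝ ∙ u)ᗮ :=
        (measure_mono hcover).trans (measure_union_le _ _)
    _ ≤ μ (ballSlab u (Ioi 0)) + μ (-ballSlab u (Ioi 0)) := by
      rw [hnull, add_zero]
      exact measure_union_le _ _
    _ = 2 * μ (ballSlab u (Ioi 0)) := by rw [Measure.measure_neg, two_mul]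

lemma measure_capPair (u : E) : μ (capPair u) = 2 * μ (cap u) := by
  rw [capPair, measure_union (disjoint_cap_neg_cap u) (isOpen_cap u).measurableSet.neg,
    Measure.measure_neg, two_mul]

theorem measure_ball_lt_measure_capPair {u v : E} (hu : ‖u‖ = 1) (hv : ‖v‖ = 1)
    (huv : ⟪v, u⟫ = 0) :
    ENNReal.ofReal ((1 / 2) ^ Module.finrank ℝ E) * μ (ball 0 1) < μ (capPair u) := by
  have hu0 : u ≠ 0 := norm_ne_zero_iff.1 (by rw [hu]; exact one_ne_zero)
  rw [← Measure.addHaar_ball_of_pos μ 0 (by norm_num : (0 : ℝ) < 1 / 2), measure_capPair]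
  calc μ (ball 0 (1 / 2)) ≤ 2 * μ (ballSlab u (Ioi 0)) := measure_ball_half_le_two_mul μ hu0
    _ < 2 * μ (cap u) :=
      ENNReal.mul_lt_mul_right two_ne_zero ENNReal.ofNat_ne_top
        (measure_ballSlab_Ioi_lt_measure_cap μ hu hv huv)

theorem exists_unitDistanceFree_subset_closedBall (h : 2 ≤ Module.finrank ℝ E) :
    ∃ S : Set E, MeasurableSet S ∧ S ⊆ closedBall 0 1 ∧ (∀ x ∈ S, ∀ y ∈ S, dist x y ≠ 1) ∧
      ENNReal.ofReal ((1 / 2) ^ Module.finrank ℝ E) * μ (ball 0 1) < μ S := by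
  let b := stdOrthonormalBasis ℝ E
  let i : Fin (Module.finrank ℝ E) := ⟨0, by omega⟩
  let j : Fin (Module.finrank ℝ E) := ⟨1, by omega⟩
  have hij : j ≠ i := by simp [i, j, Fin.ext_iff]
  refine ⟨capPair (b i), (isOpen_cap _).measurableSet.union (isOpen_cap _).measurableSet.neg,
    (capPair_subset_ball _).trans ball_subset_closedBall,
    fun x hx y hy => dist_ne_one_of_mem_capPair (b.orthonormal.1 i).le hx hy,
    measure_ball_lt_measure_capPair μ (b.orthonormal.1 i) (b.orthonormal.1 j)
      (b.orthonormal.2 hij)⟩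

end Measure

end LarmanRogers

theorem stmt_14 (n : ℕ) (hn : 2 ≤ n) :
    ∃ S : Set (EuclideanSpace ℝ (Fin n)),
      MeasurableSet S ∧ S ⊆ closedBall 0 1 ∧
      (∀ x ∈ S, ∀ y ∈ S, dist x y ≠ 1) ∧
      (volume S).toReal >
        (1/2) ^ n * (volume (ball (0 : EuclideanSpace ℝ (Fin n)) 1)).toReal := by
  obtain ⟨S, hS, hSball, hdist, hvol⟩ :=
    LarmanRogers.exists_unitDistanceFree_subset_closedBall
      (volume : Measure (EuclideanSpace ℝ (Fin n))) (by rwa [finrank_euclideanSpace_fin])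
  rw [finrank_euclideanSpace_fin] at hvol
  have hSfin : volume S ≠ ⊤ := ((measure_mono hSball).trans_lt measure_closedBall_lt_top).ne
  have hlt := (ENNReal.toReal_lt_toReal
    (ENNReal.mul_ne_top ENNReal.ofReal_ne_top measure_ball_lt_top.ne) hSfin).2 hvol
  rw [ENNReal.toReal_mul, ENNReal.toReal_ofReal (by positivity)] at hlt
  exact ⟨S, hS, hSball, hdist, hlt⟩
end
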